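/- arXiv:1309.2569 — 2 statements merged into one kernel-verified Lean document; each statement's English description precedes it below -/
import Mathlib

section
/- Let K be a finite p-group with an elementary abelian normal subgroup A of index p, and let y, z ∈ K \ A with Φ(K)z = Φ(K)y. Then z^p = y^p. -/
/-!
Let `V : K →* A` be the transfer. For `x ∉ A` the cosets of `A` form a single `⟨x⟩`-orbit and
`x ^ p ∈ A` is central, so `V x = x ^ p`. As `A` is elementary abelian, `V` factors through an
elementary abelian quotient of `K`, whose Frattini subgroup is trivial (its points are separated by
linear functionals over `ZMod p`, whose kernels have index `p`); hence `Φ(K) ≤ ker V` and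
`z ^ p = V z = V y * V (y⁻¹ * z) = V y = y ^ p`.
-/

open Subgroup
open scoped IsMulCommutative

namespace Subgroup

variable {G : Type*} [Group G]

theorem isCoatom_of_index_prime {H : Subgroup G} (hH : H.index.Prime) : IsCoatom H := by
  have : H.FiniteIndex := ⟨hH.ne_zero⟩
  refine ⟨fun h => by simp [h, Nat.not_prime_one] at hH, fun B hB => ?_⟩
  rcases (Nat.dvd_prime hH).1 (index_dvd_of_le hB.le) with h | h
  · exact index_eq_one.mp h
  · exact absurd h (index_strictAnti hB).ne

theorem sup_zpowers_eq_top_of_index_prime {H : Subgroup G} (hH : H.index.Prime) {g : G}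
    (hg : g ∉ H) : H ⊔ zpowers g = ⊤ :=
  (isCoatom_of_index_prime hH).2 _ <| lt_of_le_of_ne le_sup_left fun h =>
    hg (h ▸ mem_sup_right (mem_zpowers g))

end Subgroup

theorem frattini_eq_bot_of_pow_eq_one {p : ℕ} [Fact p.Prime] {E : Type*} [CommGroup E]
    (hE : ∀ x : E, x ^ p = 1) : frattini E = ⊥ := by
  have : Module (ZMod p) (Additive E) := AddCommMonoid.zmodModule fun x => hE x.toMul
  refine eq_bot_iff.mpr fun g hg => mem_bot.mpr ?_
  by_contra hg1
  obtain ⟨f, hf⟩ : ∃ f : Additive E →ₗ[ZMod p] ZMod p, f (Additive.ofMul g) ≠ 0 :=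
    Module.Projective.exists_dual_ne_zero (ZMod p) (by simpa using hg1 : Additive.ofMul g ≠ 0)
  let φ : E →* Multiplicative (ZMod p) := AddMonoidHom.toMultiplicativeRight f.toAddMonoidHom
  have hφ : Function.Surjective φ :=
    Multiplicative.ofAdd.surjective.comp <| (LinearMap.surjective (by rintro rfl; exact hf rfl)).comp
      Additive.ofMul.surjective
  have hker : φ.ker.index.Prime := by
    rw [index_ker, MonoidHom.range_eq_top.mpr hφ, card_top, Nat.card_eq_fintype_card]
    simpa using Fact.out
  exact hf (φ.mem_ker.mp (frattini_le_coatom (isCoatom_of_index_prime hker) hg))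

theorem frattini_le_ker_of_pow_eq_one {p : ℕ} [Fact p.Prime] {G C : Type*} [Group G]
    [CommGroup C] (hC : ∀ c : C, c ^ p = 1) (φ : G →* C) : frattini G ≤ φ.ker := by
  have h := frattini_le_comap_frattini_of_surjective φ.rangeRestrict_surjective
  rwa [frattini_eq_bot_of_pow_eq_one (fun c => Subtype.ext (hC c)), MonoidHom.comap_bot,
    MonoidHom.ker_rangeRestrict] at h

theorem MonoidHom.transfer_id_eq_pow_index {G : Type*} [Group G] {H : Subgroup G} [H.Normal]
    [IsMulCommutative H] [H.FiniteIndex] {g : G} (hg : H ⊔ zpowers g = ⊤) :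
    (MonoidHom.transfer (MonoidHom.id H) g : G) = g ^ H.index := by
  refine congrArg Subtype.val (MonoidHom.transfer_eq_pow _ g fun k g₀ hk => ?_)
  have hgk : g ^ k ∈ H := by simpa [mul_assoc] using ‹H.Normal›.conj_mem _ hk g₀
  have hcentral : ⊤ ≤ centralizer {g ^ k} := hg ▸ sup_le
    (fun a ha => mem_centralizer_singleton_iff.mpr (setLike_mul_comm ha hgk))
    (zpowers_le.mpr (mem_centralizer_singleton_iff.mpr (pow_mul_comm' g k).symm))
  rw [mul_assoc, ← mem_centralizer_singleton_iff.mp (hcentral (mem_top g₀)), inv_mul_cancel_left]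

theorem frattini_coset_eq_imp_pow_eq_general
    {p : ℕ} (hp : p.Prime) {K : Type*} [Group K] (A : Subgroup K) [A.Normal]
    (hAab : ∀ a ∈ A, ∀ b ∈ A, a * b = b * a)
    (hAelem : ∀ a ∈ A, a ^ p = 1)
    (hAindex : A.index = p)
    (y z : K) (hy : y ∉ A) (hz : z ∉ A)
    (hcoset : y⁻¹ * z ∈ frattini K) :
    z ^ p = y ^ p := by
  have : Fact p.Prime := ⟨hp⟩
  have : IsMulCommutative A := ⟨⟨fun a b => Subtype.ext (hAab a a.2 b b.2)⟩⟩
  have : A.FiniteIndex := ⟨hAindex ▸ hp.ne_zero⟩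
  have hAprime : A.index.Prime := hAindex ▸ hp
  set V := MonoidHom.transfer (MonoidHom.id A)
  have hV : ∀ x ∉ A, (V x : K) = x ^ p := fun x hx =>
    hAindex ▸ MonoidHom.transfer_id_eq_pow_index (sup_zpowers_eq_top_of_index_prime hAprime hx)
  have hVc : V (y⁻¹ * z) = 1 :=
    frattini_le_ker_of_pow_eq_one (fun a => Subtype.ext (hAelem a a.2)) V hcoset
  calc z ^ p = V (y * (y⁻¹ * z)) := by rw [mul_inv_cancel_left, hV z hz]
    _ = y ^ p := by rw [map_mul, hVc, mul_one, hV y hy]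

/-- Let `K` be a finite `p`-group with an elementary abelian normal
subgroup `A` of index `p`, and let `y, z ∈ K \ A` with `Φ(K)z = Φ(K)y`.
Then `z ^ p = y ^ p`. -/
theorem frattini_coset_eq_imp_pow_eq
    {p : ℕ} (hp : p.Prime) {K : Type*} [Group K] [Finite K]
    (hK : IsPGroup p K) (A : Subgroup K) [A.Normal]
    (hAab : ∀ a ∈ A, ∀ b ∈ A, a * b = b * a)
    (hAelem : ∀ a ∈ A, a ^ p = 1)
    (hAindex : A.index = p)
    (y z : K) (hy : y ∉ A) (hz : z ∉ A)
    (hcoset : y⁻¹ * z ∈ frattini K) :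
    z ^ p = y ^ p :=
  frattini_coset_eq_imp_pow_eq_general hp A hAab hAelem hAindex y z hy hz hcoset
end

section
/- Let A = HNN(G₁, C, t) = ⟨G₁, t | c^t = c₁⟩ be a proper pro-p HNN extension of a finitely generated pro-p group G₁ with procyclic associated subgroups C = ⟨c⟩ and C₁ = ⟨c₁⟩. Then d(G₁) ≤ d(A) ≤ d(G₁) + 1, and d(A) = d(G₁) + 1 if and only if cΦ(G₁) = c₁Φ(G₁). -/
/-- A pro-`p` group: a compact, Hausdorff, totally disconnected topological group in
which every open normal subgroup has `p`-power index. -/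
def IsProP (p : ℕ) (G : Type*) [Group G] [TopologicalSpace G] : Prop :=
  IsTopologicalGroup G ∧ CompactSpace G ∧ T2Space G ∧ TotallyDisconnectedSpace G ∧
    ∀ U : Subgroup G, U.Normal → IsOpen (U : Set G) → ∃ k : ℕ, U.index = p ^ k

/-- The minimal number of topological generators of a topological group. -/
noncomputable def topGenNum (G : Type*) [Group G] [TopologicalSpace G]
    [IsTopologicalGroup G] : ℕ :=
  sInf {n : ℕ | ∃ s : Fin n → G,
    (Subgroup.closure (Set.range s)).topologicalClosure = ⊤}

/-- A topological group is topologically finitely generated. -/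
def TopFG (G : Type*) [Group G] [TopologicalSpace G] [IsTopologicalGroup G] : Prop :=
  ∃ n : ℕ, ∃ s : Fin n → G,
    (Subgroup.closure (Set.range s)).topologicalClosure = ⊤

/-- `F` is a free pro-`p` group of rank `d`: it has a `d`-tuple of topological
generators which is universal for continuous maps to finite `p`-groups. -/
def IsFreeProP (p : ℕ) (F : Type*) [Group F] [TopologicalSpace F]
    [IsTopologicalGroup F] (d : ℕ) : Prop :=
  ∃ b : Fin d → F,
    (Subgroup.closure (Set.range b)).topologicalClosure = ⊤ ∧
    ∀ (P : Type) [Group P] [Finite P] [TopologicalSpace P] [DiscreteTopology P],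
      IsPGroup p P → ∀ f : Fin d → P,
        ∃! φ : F →* P, Continuous φ ∧ ∀ i, φ (b i) = f i

/-- The Frattini subgroup of a pro-`p` group: the closure of `[G,G]·G^p`. -/
def proFrattini (p : ℕ) (G : Type*) [Group G] [TopologicalSpace G]
    [IsTopologicalGroup G] : Subgroup G :=
  (commutator G ⊔ Subgroup.closure {x : G | ∃ g : G, g ^ p = x}).topologicalClosure


/-!
For a pro-`p` group `G`, the continuous homomorphisms `G → ℤ/p` form an `𝔽_p`-vector space
`V(G) = modPChars p G`, the dual of `G/Φ(G)`. A finite tuple topologically generates `G` iff no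
nonzero element of `V(G)` vanishes on it: a proper closed subgroup lies in a proper open one,
whose image in a finite `p`-quotient lies in a normal subgroup of index `p`. Hence
`d(G) = dim V(G)`.

By the universal property, a character of `A` is the same as a character `w` of `G₁` with
`w c = w c₁` together with an arbitrary value at `t`, so `d(A) = dim ker(ev_{c⁻¹c₁}) + 1`, where
`ev_z : V(G₁) → ℤ/p` is evaluation at `z`. Finally `ev_z = 0` iff `z ∈ Φ(G₁)`: characters kill
`Φ`, while `G₁/Φ(G₁)` is elementary abelian, so a point outside `Φ` is detected by a linear form.
-/

open Module

lemma Multiplicative.zmod_pow_eq_one {p : ℕ} (y : Multiplicative (ZMod p)) : y ^ p = 1 := by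
  simp [← toAdd_eq_zero]

lemma Multiplicative.card_zmod (p : ℕ) : Nat.card (Multiplicative (ZMod p)) = p :=
  (Nat.card_congr Multiplicative.toAdd).trans (Nat.card_zmod p)

lemma isPGroup_multiplicative_zmod (p : ℕ) : IsPGroup p (Multiplicative (ZMod p)) :=
  IsPGroup.of_card (n := 1) (by rw [Multiplicative.card_zmod, pow_one])

lemma IsPGroup.exists_ne_one_le_ker_of_ne_top {p : ℕ} [hp : Fact p.Prime] {Q : Type*}
    [Group Q] [Finite Q] (hQ : IsPGroup p Q) {M : Subgroup Q} (hM : M ≠ ⊤) :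
    ∃ χ : Q →* Multiplicative (ZMod p), χ ≠ 1 ∧ M ≤ χ.ker := by
  obtain ⟨m, hm⟩ := hQ.exists_card_eq
  obtain ⟨n, hn⟩ := (hQ.to_subgroup M).exists_card_eq
  have hnm : n < m := by
    have hle := M.card_le_card_group
    have hne := mt M.card_eq_iff_eq_top.mp hM
    rw [hm, hn] at hle hne
    exact lt_of_le_of_ne ((Nat.pow_le_pow_iff_right hp.out.one_lt).mp hle) (mt (congrArg _) hne)
  -- `M` lies in a subgroup of index `p`, normal because `p` is the least prime dividing `|Q|`.
  obtain ⟨K, hK, hMK⟩ := Sylow.exists_subgroup_card_pow_prime_le p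
    (hm ▸ pow_dvd_pow p (Nat.sub_le m 1)) M hn (Nat.le_sub_one_of_lt hnm)
  have hKindex : K.index = p := by
    have := K.card_mul_index
    rw [hK, hm, ← Nat.sub_add_cancel (n := m) (m := 1) (by omega), pow_succ] at this
    exact Nat.eq_of_mul_eq_mul_left (pow_pos hp.out.pos _) this
  have : K.Normal := Subgroup.normal_of_index_eq_minFac_card <| by
    rw [hKindex, hm, Nat.Prime.pow_minFac hp.out (by omega)]
  let e : Q ⧸ K ≃* Multiplicative (ZMod p) :=
    mulEquivOfPrimeCardEq (K.index_eq_card ▸ hKindex) (Multiplicative.card_zmod p)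
  have hker : (e.toMonoidHom.comp (QuotientGroup.mk' K)).ker = K := by
    ext x
    simp
  refine ⟨e.toMonoidHom.comp (QuotientGroup.mk' K), fun h => ?_, hker.symm ▸ hMK⟩
  rw [← hker, h, MonoidHom.ker_one, Subgroup.index_top] at hKindex
  exact hp.out.one_lt.ne hKindex

lemma exists_monoidHom_zmod_apply_ne_one {p : ℕ} [Fact p.Prime] {Q : Type*} [CommGroup Q]
    (hexp : ∀ x : Q, x ^ p = 1) {z : Q} (hz : z ≠ 1) :
    ∃ χ : Q →* Multiplicative (ZMod p), χ z ≠ 1 := by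
  have : Module (ZMod p) (Additive Q) :=
    AddCommGroup.zmodModule fun x => congrArg Additive.ofMul (hexp x.toMul)
  obtain ⟨φ, hφ⟩ : ∃ φ : Additive Q →ₗ[ZMod p] ZMod p, φ (Additive.ofMul z) ≠ 0 := by
    by_contra! h
    exact hz ((forall_dual_apply_eq_zero_iff (ZMod p) (Additive.ofMul z)).mp h)
  exact ⟨AddMonoidHom.toMultiplicativeRight φ.toAddMonoidHom, hφ⟩

lemma Subgroup.exists_isOpen_le_notMem {G : Type*} [Group G] [TopologicalSpace G]
    [IsTopologicalGroup G] [CompactSpace G] [TotallyDisconnectedSpace G] {H : Subgroup G}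
    (hH : IsClosed (H : Set G)) {g : G} (hg : g ∉ H) :
    ∃ K : Subgroup G, IsOpen (K : Set G) ∧ H ≤ K ∧ g ∉ K := by
  rw [show H = _ from ProfiniteGrp.closedSubgroup_eq_sInf_open ⟨H, hH⟩, Subgroup.mem_sInf] at hg
  push Not at hg
  obtain ⟨K, ⟨hKopen, hHK⟩, hgK⟩ := hg
  exact ⟨K, hKopen, hHK, hgK⟩

lemma Submodule.exists_fin_finrank_separating_points {K X : Type*} [Field K]
    (W : Submodule K (X → K)) [FiniteDimensional K W] :
    ∃ x : Fin (finrank K W) → X, ∀ f ∈ W, (∀ i, f (x i) = 0) → f = 0 := by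
  -- The evaluations span `Dual K W`, so some `finrank K W` of them already do.
  let ev : X → Dual K W := fun x => (LinearMap.proj x).comp W.subtype
  have hspan : span K (Set.range ev) = ⊤ := by
    have hbot : (span K (Set.range ev)).dualCoannihilator = ⊥ := by
      refine eq_bot_iff.mpr fun w hw => Subtype.ext (funext fun x => ?_)
      exact (mem_dualCoannihilator w).mp hw (ev x) (subset_span ⟨x, rfl⟩)
    rw [← Subspace.dualCoannihilator_dualAnnihilator_eq (W := span K (Set.range ev)), hbot,
      dualAnnihilator_bot]
  obtain ⟨φ, hφ, hφspan, -⟩ := exists_fun_fin_finrank_span_eq K (Set.range ev)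
  choose x hx using hφ
  have hrank : finrank K (span K (Set.range ev)) = finrank K W := by
    rw [hspan, finrank_top, Subspace.dual_finrank_eq]
  rw [← hrank]
  refine ⟨x, fun f hf hfx => congrArg Subtype.val ((forall_dual_apply_eq_zero_iff K ⟨f, hf⟩).mp ?_)⟩
  have hker : span K (Set.range φ) ≤ LinearMap.ker (Dual.eval K W ⟨f, hf⟩) :=
    span_le.mpr (Set.range_subset_iff.mpr fun i => by simp [← hx i, ev, hfx i])
  rw [hφspan, hspan] at hker
  exact fun ψ => hker (mem_top (x := ψ))

def modPChars (p : ℕ) (G : Type*) [Group G] [TopologicalSpace G] :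
    Submodule (ZMod p) (G → ZMod p) where
  carrier := {f | (∀ x y, f (x * y) = f x + f y) ∧ Continuous f}
  add_mem' hf hg := ⟨fun x y => by simp only [Pi.add_apply, hf.1, hg.1]; abel, hf.2.add hg.2⟩
  zero_mem' := ⟨fun _ _ => (add_zero 0).symm, continuous_const⟩
  smul_mem' a f hf := ⟨fun x y => by simp only [Pi.smul_apply, hf.1, smul_add], hf.2.const_smul a⟩

namespace modPChars

section Basic

variable {p : ℕ} {G : Type*} [Group G] [TopologicalSpace G]

instance : CoeFun (modPChars p G) (fun _ => G → ZMod p) := ⟨Subtype.val⟩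

protected lemma apply_mul (f : modPChars p G) (x y : G) : f (x * y) = f x + f y :=
  f.2.1 x y

def toMonoidHom (f : modPChars p G) : G →* Multiplicative (ZMod p) :=
  MonoidHom.mk' (fun x => Multiplicative.ofAdd (f x)) f.2.1

lemma continuous_toMonoidHom (f : modPChars p G) : Continuous (toMonoidHom f) :=
  continuous_ofAdd.comp f.2.2

lemma isClosed_ker (f : modPChars p G) : IsClosed ((toMonoidHom f).ker : Set G) :=
  isClosed_singleton.preimage (continuous_toMonoidHom f)

lemma apply_one (f : modPChars p G) : f 1 = 0 :=
  congrArg Multiplicative.toAdd (map_one (toMonoidHom f))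

lemma apply_conj (f : modPChars p G) (t x : G) : f (t⁻¹ * x * t) = f x := by
  have : toMonoidHom f (t⁻¹ * x * t) = toMonoidHom f x := by
    rw [map_mul, map_mul, map_inv, mul_comm, mul_inv_cancel_left]
  exact congrArg Multiplicative.toAdd this

lemma toAdd_comp_mem (χ : G →* Multiplicative (ZMod p)) (hχ : Continuous χ) :
    (fun x => Multiplicative.toAdd (χ x)) ∈ modPChars p G :=
  ⟨fun x y => by simp only [map_mul, toAdd_mul], continuous_toAdd.comp hχ⟩

def eval (g : G) : modPChars p G →ₗ[ZMod p] ZMod p :=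
  (LinearMap.proj g).comp (modPChars p G).subtype

def comap {H : Type*} [Group H] [TopologicalSpace H] (φ : G →* H) (hφ : Continuous φ) :
    modPChars p H →ₗ[ZMod p] modPChars p G where
  toFun f := ⟨f ∘ φ, fun x y => by simp only [Function.comp_apply, map_mul, modPChars.apply_mul f],
    f.2.2.comp hφ⟩
  map_add' _ _ := rfl
  map_smul' _ _ := rfl

end Basic

section TopologicalGroup

variable {p : ℕ} {G : Type*} [Group G] [TopologicalSpace G] [IsTopologicalGroup G]

def ofQuotient {N : Subgroup G} [N.Normal] (hN : IsOpen (N : Set G))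
    (χ : G ⧸ N →* Multiplicative (ZMod p)) : modPChars p G :=
  have := QuotientGroup.discreteTopology hN
  ⟨_, toAdd_comp_mem (χ.comp (QuotientGroup.mk' N))
    ((continuous_of_discreteTopology (f := ⇑χ)).comp continuous_quot_mk)⟩

lemma eq_zero_of_dense {n : ℕ} {s : Fin n → G}
    (hs : (Subgroup.closure (Set.range s)).topologicalClosure = ⊤) (f : modPChars p G)
    (hf : ∀ i, f (s i) = 0) : f = 0 := by
  have hle : (Subgroup.closure (Set.range s)).topologicalClosure ≤ (toMonoidHom f).ker := by
    refine Subgroup.topologicalClosure_minimal _ ?_ (isClosed_ker f)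
    rw [Subgroup.closure_le]
    rintro _ ⟨i, rfl⟩
    exact congrArg Multiplicative.ofAdd (hf i)
  rw [hs] at hle
  exact Subtype.ext <| funext fun x => congrArg Multiplicative.toAdd (hle (Subgroup.mem_top x))

def evalTuple {n : ℕ} (s : Fin n → G) : modPChars p G →ₗ[ZMod p] (Fin n → ZMod p) :=
  LinearMap.pi fun i => eval (s i)

lemma evalTuple_injective {n : ℕ} {s : Fin n → G}
    (hs : (Subgroup.closure (Set.range s)).topologicalClosure = ⊤) :
    Function.Injective (evalTuple (p := p) s) := by
  rw [← LinearMap.ker_eq_bot, eq_bot_iff]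
  exact fun f hf => eq_zero_of_dense hs f (congrFun hf)

lemma apply_eq_zero_of_mem_proFrattini (f : modPChars p G) {z : G}
    (hz : z ∈ proFrattini p G) : f z = 0 := by
  suffices proFrattini p G ≤ (toMonoidHom f).ker from
    congrArg Multiplicative.toAdd (this hz)
  refine Subgroup.topologicalClosure_minimal _ (sup_le ?_ ?_) (isClosed_ker f)
  · exact Abelianization.commutator_subset_ker _
  · rw [Subgroup.closure_le]
    rintro _ ⟨g, rfl⟩
    rw [SetLike.mem_coe, MonoidHom.mem_ker, map_pow, Multiplicative.zmod_pow_eq_one]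

variable [Fact p.Prime]

lemma finiteDimensional_of_dense {n : ℕ} {s : Fin n → G}
    (hs : (Subgroup.closure (Set.range s)).topologicalClosure = ⊤) :
    FiniteDimensional (ZMod p) (modPChars p G) :=
  FiniteDimensional.of_injective (evalTuple (p := p) s) (evalTuple_injective hs)

lemma finrank_le_of_dense {n : ℕ} {s : Fin n → G}
    (hs : (Subgroup.closure (Set.range s)).topologicalClosure = ⊤) :
    finrank (ZMod p) (modPChars p G) ≤ n := by
  have := finiteDimensional_of_dense (p := p) hs
  simpa using LinearMap.finrank_le_finrank_of_injective (evalTuple_injective (p := p) hs)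

lemma exists_ne_zero_of_isClosed_of_ne_top (hG : IsProP p G) {H : Subgroup G}
    (hHc : IsClosed (H : Set G)) (hH : H ≠ ⊤) : ∃ f : modPChars p G, f ≠ 0 ∧ ∀ x ∈ H, f x = 0 := by
  obtain ⟨-, _, -, _, hindex⟩ := hG
  obtain ⟨g, hg⟩ : ∃ g, g ∉ H := by
    by_contra! h
    exact hH ((Subgroup.eq_top_iff' H).mpr h)
  obtain ⟨K, hKopen, hHK, hgK⟩ := Subgroup.exists_isOpen_le_notMem hHc hg
  obtain ⟨N, hNK⟩ := ProfiniteGrp.exist_openNormalSubgroup_sub_open_nhds_of_one hKopen K.one_mem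
  have : Finite (G ⧸ N.toSubgroup) := Subgroup.quotient_finite_of_isOpen _ N.isOpen
  have hQ : IsPGroup p (G ⧸ N.toSubgroup) := by
    obtain ⟨k, hk⟩ := hindex N.toSubgroup inferInstance N.isOpen
    exact IsPGroup.of_card (N.toSubgroup.index_eq_card ▸ hk)
  have hM : K.map (QuotientGroup.mk' N.toSubgroup) ≠ ⊤ := fun h => hgK <| by
    have : g ∈ (K.map (QuotientGroup.mk' N.toSubgroup)).comap (QuotientGroup.mk' _) := by
      rw [h]
      exact Subgroup.mem_top _
    rwa [Subgroup.comap_map_eq, QuotientGroup.ker_mk',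
      sup_eq_left.mpr (show N.toSubgroup ≤ K from hNK)] at this
  obtain ⟨χ, hχ, hMχ⟩ := hQ.exists_ne_one_le_ker_of_ne_top hM
  refine ⟨ofQuotient N.isOpen χ, fun h => hχ ?_, fun x hx => ?_⟩
  · ext x
    exact toAdd_eq_zero.mp (congrFun (congrArg Subtype.val h) x)
  · exact toAdd_eq_zero.mpr (hMχ ⟨x, hHK hx, rfl⟩)

lemma dense_of_forall_eq_zero (hG : IsProP p G) {n : ℕ} (s : Fin n → G)
    (hs : ∀ f : modPChars p G, (∀ i, f (s i) = 0) → f = 0) :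
    (Subgroup.closure (Set.range s)).topologicalClosure = ⊤ := by
  by_contra hne
  obtain ⟨f, hf, hfs⟩ := exists_ne_zero_of_isClosed_of_ne_top hG
    (Subgroup.isClosed_topologicalClosure _) hne
  exact hf (hs f fun i => hfs _ (Subgroup.le_topologicalClosure _
    (Subgroup.subset_closure (Set.mem_range_self i))))

lemma topGenNum_eq_finrank (hG : IsProP p G) [FiniteDimensional (ZMod p) (modPChars p G)] :
    topGenNum G = finrank (ZMod p) (modPChars p G) := by
  obtain ⟨x, hx⟩ := (modPChars p G).exists_fin_finrank_separating_points
  have hmem : finrank (ZMod p) (modPChars p G) ∈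
      {n | ∃ s : Fin n → G, (Subgroup.closure (Set.range s)).topologicalClosure = ⊤} :=
    ⟨x, dense_of_forall_eq_zero hG x fun f hf => Subtype.ext (hx f f.2 hf)⟩
  refine le_antisymm (Nat.sInf_le hmem) ?_
  obtain ⟨s, hs⟩ := Nat.sInf_mem ⟨_, hmem⟩
  exact finrank_le_of_dense hs

lemma finrank_ker_eval_of_mem_proFrattini {z : G} (hz : z ∈ proFrattini p G) :
    finrank (ZMod p) (LinearMap.ker (eval (p := p) z)) = finrank (ZMod p) (modPChars p G) := by
  have : eval (p := p) z = 0 := LinearMap.ext fun f => apply_eq_zero_of_mem_proFrattini f hz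
  rw [this, LinearMap.ker_zero, finrank_top]

section Profinite

open scoped IsMulCommutative

variable [CompactSpace G] [TotallyDisconnectedSpace G]

lemma exists_apply_ne_zero_of_notMem_proFrattini {z : G} (hz : z ∉ proFrattini p G) :
    ∃ f : modPChars p G, f z ≠ 0 := by
  obtain ⟨K, hKopen, hΦK, hzK⟩ :=
    Subgroup.exists_isOpen_le_notMem (Subgroup.isClosed_topologicalClosure _) hz
  have hBK := (Subgroup.le_topologicalClosure _).trans hΦK
  have hcommK : commutator G ≤ K := le_sup_left.trans hBK
  have : K.Normal := Subgroup.Normal.of_commutator_le G hcommK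
  have : IsMulCommutative (G ⧸ K) :=
    Subgroup.Normal.quotient_commutative_iff_commutator_le.mpr hcommK
  have hexp : ∀ q : G ⧸ K, q ^ p = 1 := by
    rintro ⟨x⟩
    exact (QuotientGroup.eq_one_iff _).mpr (hBK (le_sup_right (a := commutator G)
      (Subgroup.subset_closure ⟨x, rfl⟩)))
  obtain ⟨χ, hχ⟩ := exists_monoidHom_zmod_apply_ne_one hexp
    (mt (QuotientGroup.eq_one_iff z).mp hzK)
  exact ⟨ofQuotient hKopen χ, mt toAdd_eq_zero.mp hχ⟩

lemma finrank_ker_eval_add_one_of_notMem_proFrattini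
    [FiniteDimensional (ZMod p) (modPChars p G)] {z : G} (hz : z ∉ proFrattini p G) :
    finrank (ZMod p) (LinearMap.ker (eval (p := p) z)) + 1 =
      finrank (ZMod p) (modPChars p G) := by
  obtain ⟨f, hf⟩ := exists_apply_ne_zero_of_notMem_proFrattini hz
  exact Dual.finrank_ker_add_one_of_ne_zero fun h => hf (LinearMap.congr_fun h f)

end Profinite

end TopologicalGroup

section HNN

variable {p : ℕ} {G₁ A : Type*} [Group G₁] [TopologicalSpace G₁] [Group A] [TopologicalSpace A]
  {ι : G₁ →* A} {c c₁ : G₁} {t : A}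

lemma comap_mem_ker_eval (hι : Continuous ι) (hrel : t⁻¹ * ι c * t = ι c₁)
    (f : modPChars p A) : comap ι hι f ∈ LinearMap.ker (eval (c⁻¹ * c₁)) := by
  show f (ι (c⁻¹ * c₁)) = 0
  rw [map_mul, modPChars.apply_mul f, ← hrel, apply_conj, ← modPChars.apply_mul f, ← map_mul,
    inv_mul_cancel, map_one, apply_one]

def hnnRestrict (hι : Continuous ι) (hrel : t⁻¹ * ι c * t = ι c₁) :
    modPChars p A →ₗ[ZMod p] LinearMap.ker (eval (p := p) (c⁻¹ * c₁)) × ZMod p :=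
  ((comap ι hι).codRestrict _ (comap_mem_ker_eval hι hrel)).prod (eval t)

lemma hnnRestrict_injective (hι : Continuous ι) (hrel : t⁻¹ * ι c * t = ι c₁)
    (huniv : ∀ f : G₁ →* Multiplicative (ZMod p), Continuous f → ∀ s, s⁻¹ * f c * s = f c₁ →
      ∃! φ : A →* Multiplicative (ZMod p), Continuous φ ∧ φ.comp ι = f ∧ φ t = s) :
    Function.Injective (hnnRestrict (p := p) hι hrel) := by
  rw [← LinearMap.ker_eq_bot, eq_bot_iff]
  intro f hf
  have hfι : ∀ x, f (ι x) = 0 := fun x => congrArg (fun g => g.1.1 x) (congrArg Prod.fst hf)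
  have hft : f t = 0 := congrArg Prod.snd hf
  have : toMonoidHom f = 1 := (huniv 1 continuous_const 1 (by simp)).unique
    ⟨continuous_toMonoidHom f, MonoidHom.ext fun x => toAdd_eq_zero.mp (hfι x),
      toAdd_eq_zero.mp hft⟩
    ⟨continuous_const, MonoidHom.one_comp ι, rfl⟩
  exact (Submodule.mem_bot _).mpr
    (Subtype.ext (funext fun x => congrArg Multiplicative.toAdd (DFunLike.congr_fun this x)))

lemma hnnRestrict_surjective (hι : Continuous ι) (hrel : t⁻¹ * ι c * t = ι c₁)
    (huniv : ∀ f : G₁ →* Multiplicative (ZMod p), Continuous f → ∀ s, s⁻¹ * f c * s = f c₁ →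
      ∃! φ : A →* Multiplicative (ZMod p), Continuous φ ∧ φ.comp ι = f ∧ φ t = s) :
    Function.Surjective (hnnRestrict (p := p) hι hrel) := by
  rintro ⟨⟨w, hw⟩, a⟩
  have hwc : toMonoidHom w c = toMonoidHom w c₁ := by
    rw [← inv_mul_eq_one, ← map_inv, ← map_mul]
    exact toAdd_eq_zero.mp hw
  obtain ⟨φ, ⟨hφ, hφι, hφt⟩, -⟩ := huniv (toMonoidHom w) (continuous_toMonoidHom w)
    (Multiplicative.ofAdd a) (by rw [mul_comm, mul_inv_cancel_left, hwc])
  refine ⟨⟨_, toAdd_comp_mem φ hφ⟩, Prod.ext (Subtype.ext (Subtype.ext (funext fun x => ?_))) ?_⟩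
  · exact congrArg Multiplicative.toAdd (DFunLike.congr_fun hφι x)
  · exact congrArg Multiplicative.toAdd hφt

noncomputable def hnnEquiv (hι : Continuous ι) (hrel : t⁻¹ * ι c * t = ι c₁)
    (huniv : ∀ f : G₁ →* Multiplicative (ZMod p), Continuous f → ∀ s, s⁻¹ * f c * s = f c₁ →
      ∃! φ : A →* Multiplicative (ZMod p), Continuous φ ∧ φ.comp ι = f ∧ φ t = s) :
    modPChars p A ≃ₗ[ZMod p] LinearMap.ker (eval (p := p) (c⁻¹ * c₁)) × ZMod p :=
  LinearEquiv.ofBijective (hnnRestrict hι hrel)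
    ⟨hnnRestrict_injective hι hrel huniv, hnnRestrict_surjective hι hrel huniv⟩

end HNN

end modPChars

theorem rank_proP_HNN_extension_general
    {p : ℕ} (hp : p.Prime)
    {G₁ : Type*} [Group G₁] [TopologicalSpace G₁] [IsTopologicalGroup G₁]
    {A : Type*} [Group A] [TopologicalSpace A] [IsTopologicalGroup A]
    (h₁ : IsProP p G₁) (hA : IsProP p A) (hfg₁ : TopFG G₁)
    (ι : G₁ →* A) (hιcont : Continuous ι)
    (c c₁ : G₁) (t : A) (hrel : t⁻¹ * ι c * t = ι c₁)
    (huniv : ∀ (P : Type) [Group P] [Finite P] [TopologicalSpace P]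
      [DiscreteTopology P], IsPGroup p P →
      ∀ (f : G₁ →* P), Continuous f → ∀ s : P, s⁻¹ * f c * s = f c₁ →
        ∃! φ : A →* P, Continuous φ ∧ φ.comp ι = f ∧ φ t = s) :
    (topGenNum G₁ ≤ topGenNum A ∧ topGenNum A ≤ topGenNum G₁ + 1) ∧
    (topGenNum A = topGenNum G₁ + 1 ↔ c⁻¹ * c₁ ∈ proFrattini p G₁) := by
  have : Fact p.Prime := ⟨hp⟩
  obtain ⟨n, s, hs⟩ := hfg₁
  have := modPChars.finiteDimensional_of_dense (p := p) hs
  let e := modPChars.hnnEquiv hιcont hrel (huniv _ (isPGroup_multiplicative_zmod p))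
  have : FiniteDimensional (ZMod p) (modPChars p A) := Module.Finite.equiv e.symm
  have hdA : topGenNum A =
      finrank (ZMod p) (LinearMap.ker (modPChars.eval (p := p) (c⁻¹ * c₁))) + 1 := by
    rw [modPChars.topGenNum_eq_finrank hA, e.finrank_eq, finrank_prod, finrank_self]
  have hdG := modPChars.topGenNum_eq_finrank h₁
  obtain ⟨-, _, -, _, -⟩ := h₁
  by_cases hz : c⁻¹ * c₁ ∈ proFrattini p G₁
  · have := modPChars.finrank_ker_eval_of_mem_proFrattini hz
    exact ⟨⟨by omega, by omega⟩, iff_of_true (by omega) hz⟩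
  · have := modPChars.finrank_ker_eval_add_one_of_notMem_proFrattini hz
    exact ⟨⟨by omega, by omega⟩, iff_of_false (by omega) hz⟩

/-- Let `A = HNN(G₁, C, t) = ⟨G₁, t | c^t = c₁⟩` be a proper pro-`p`
HNN extension of a finitely generated pro-`p` group `G₁` with procyclic associated
subgroups `C = ⟨c⟩` and `C₁ = ⟨c₁⟩`; `A` is characterized by its universal property for
continuous maps to finite `p`-groups, and properness means `G₁` embeds in `A`.  Then
`d(G₁) ≤ d(A) ≤ d(G₁) + 1`, and `d(A) = d(G₁) + 1` if and only if
`cΦ(G₁) = c₁Φ(G₁)`, i.e. iff `c⁻¹ * c₁ ∈ Φ(G₁)`. -/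
theorem rank_proP_HNN_extension
    {p : ℕ} (hp : p.Prime)
    {G₁ : Type*} [Group G₁] [TopologicalSpace G₁] [IsTopologicalGroup G₁]
    {A : Type*} [Group A] [TopologicalSpace A] [IsTopologicalGroup A]
    (h₁ : IsProP p G₁) (hA : IsProP p A) (hfg₁ : TopFG G₁)
    (ι : G₁ →* A) (hιcont : Continuous ι) (hιinj : Function.Injective ι)
    (c c₁ : G₁) (t : A) (hrel : t⁻¹ * ι c * t = ι c₁)
    (huniv : ∀ (P : Type) [Group P] [Finite P] [TopologicalSpace P]
      [DiscreteTopology P], IsPGroup p P →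
      ∀ (f : G₁ →* P), Continuous f → ∀ s : P, s⁻¹ * f c * s = f c₁ →
        ∃! φ : A →* P, Continuous φ ∧ φ.comp ι = f ∧ φ t = s) :
    (topGenNum G₁ ≤ topGenNum A ∧ topGenNum A ≤ topGenNum G₁ + 1) ∧
    (topGenNum A = topGenNum G₁ + 1 ↔ c⁻¹ * c₁ ∈ proFrattini p G₁) :=
  rank_proP_HNN_extension_general hp h₁ hA hfg₁ ι hιcont c c₁ t hrel huniv
end
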